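/- arXiv:1702.05855 — 3 statements merged into one kernel-verified Lean document; each statement's English description precedes it below -/
import Mathlib

section
/- Let i, j be nonnegative integers, x a complex number, and α, β complex numbers such that none of 2α−i, 2β−j, α+m−i+1/2 (0 ≤ m ≤ i), β+n−j+1/2 (0 ≤ n ≤ j), and α+β+m+n−i−j (0 ≤ m ≤ i, 0 ≤ n ≤ j) is a nonpositive integer, and such that (α−i−1/2)_m ≠ 0 for 0 ≤ m ≤ i and (β−j−1/2)_n ≠ 0 for 0 ≤ n ≤ j. Then ₁F₁(α; 2α−i; x) · ₁F₁(β; 2β−j; x) = e^x · Σ_{m=0}^{i} Σ_{n=0}^{j} [(−1)^{m+n} (−i)_m (−j)_n (2α−2i−1)_m (2β−2j−1)_n x^{m+n}] / [(2α−i)_m (2β−j)_n (α−i−1/2)_m (β−j−1/2)_n 2^{2m+2n} m! n!] · ₂F₃((α+β+m+n−i−j+1)/2, (α+β+m+n−i−j)/2; α+m−i+1/2, β+n−j+1/2, α+β+m+n−i−j; x²/4). -/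
/-- Pochhammer symbol (rising factorial) `(c)_k = c (c+1) ⋯ (c+k-1)` for complex `c`. -/
noncomputable def poch (c : ℂ) (k : ℕ) : ℂ := ∏ l ∈ Finset.range k, (c + l)

/-- Generalized hypergeometric series `ₚF_q(a; b; x) = Σ_k (a₁)_k⋯(a_p)_k / ((b₁)_k⋯(b_q)_k) · x^k/k!`. -/
noncomputable def pFq (a b : List ℂ) (x : ℂ) : ℂ :=
  ∑' k : ℕ, ((a.map (fun c => poch c k)).prod / (b.map (fun c => poch c k)).prod)
    * x ^ k / (Nat.factorial k)

/-- `c` is not a nonpositive integer, i.e. `c ≠ 0, -1, -2, …`. -/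
def NotNonposInt (c : ℂ) : Prop := ∀ n : ℕ, c ≠ -(n : ℂ)

/-!
Everything is done with formal power series: write `H_b` for the series of `₁F₁(α; b; x)`, `E` for
that of `e^{x/2}` and `B_γ` for that of `₀F₁(; γ; x²/16)`. By induction on `i`,
`H_{2α-i} = E · Σ_{m ≤ i} d_m X^m B_{α+m-i+1/2}`. For `i = 0` this is Kummer's second theorem: both
sides solve Kummer's equation and have constant term `1`. The step `i → i + 1` comes from the
contiguous relation `b H_b = b H_{b+1} + X H_{b+1}'`: on the right-hand side, the relations
`B_γ' = X B_{γ+1} / (8γ)` and `B_γ - B_{γ+1} = X² B_{γ+2} / (16γ(γ+1))` rewrite everything in the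
terms `X^u B_{α+u-i-1/2}`, whose coefficients then agree by a rational identity in `α`.

Multiplying the expansions for `(α, i)` and `(β, j)`, each product of two `₀F₁` is the `₂F₃` of the
statement, by Chu–Vandermonde and the duplication formula for Pochhammer symbols. All series
converge absolutely, so identities of power series give identities of their sums.
-/

lemma NotNonposInt.add_natCast_ne_zero {c : ℂ} (h : NotNonposInt c) (l : ℕ) : c + l ≠ 0 :=
  fun hl => h l (eq_neg_of_add_eq_zero_left hl)

lemma NotNonposInt.ne_zero_of_eq {c z : ℂ} (h : NotNonposInt c) (l : ℕ) (hz : z = c + l) :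
    z ≠ 0 :=
  hz ▸ h.add_natCast_ne_zero l

lemma NotNonposInt.ne_zero {c : ℂ} (h : NotNonposInt c) : c ≠ 0 :=
  h.ne_zero_of_eq 0 (by simp)

lemma NotNonposInt.of_eq_add_natCast {c z : ℂ} (h : NotNonposInt c) (l : ℕ) (hz : z = c + l) :
    NotNonposInt z :=
  fun n hn => h.add_natCast_ne_zero (l + n) (by push_cast; linear_combination hz.symm + hn)

lemma NotNonposInt.add_one {c : ℂ} (h : NotNonposInt c) : NotNonposInt (c + 1) :=
  h.of_eq_add_natCast 1 (by simp)

namespace Bailey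

open Finset PowerSeries
open scoped Nat

section Pochhammer

lemma poch_succ (c : ℂ) (k : ℕ) : poch c (k + 1) = poch c k * (c + k) :=
  prod_range_succ _ k

lemma poch_add (c : ℂ) (m k : ℕ) : poch c (m + k) = poch c m * poch (c + m) k := by
  simp only [poch, prod_range_add, Nat.cast_add, add_assoc]

lemma poch_succ' (c : ℂ) (k : ℕ) : poch c (k + 1) = c * poch (c + 1) k := by
  rw [add_comm, poch_add]
  simp [poch]

lemma poch_sub_one_add_two (c : ℂ) (u : ℕ) :
    poch (c - 1) (u + 2) = (c - 1) * (poch c u * (c + u)) := by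
  rw [poch_succ', sub_add_cancel, poch_succ]

lemma poch_sub_two_add_two (c : ℂ) (u : ℕ) :
    poch (c - 2) (u + 2) = (c - 2) * (c - 1) * poch c u := by
  rw [poch_succ', poch_succ', show c - 2 + 1 = c - 1 by ring, sub_add_cancel, mul_assoc]

lemma poch_two_mul (c : ℂ) (n : ℕ) :
    poch c (2 * n) = 4 ^ n * poch (c / 2) n * poch ((c + 1) / 2) n := by
  induction n with
  | zero => simp [poch]
  | succ n ih =>
    rw [show 2 * (n + 1) = 2 * n + 1 + 1 by ring, poch_succ, poch_succ, ih, poch_succ, poch_succ]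
    push_cast
    ring

lemma poch_ne_zero {c : ℂ} (h : NotNonposInt c) (k : ℕ) : poch c k ≠ 0 :=
  prod_ne_zero_iff.mpr fun l _ => h.add_natCast_ne_zero l

lemma poch_neg_natCast_of_lt {i m : ℕ} (h : i < m) : poch (-(i : ℂ)) m = 0 :=
  prod_eq_zero (mem_range.mpr h) (neg_add_cancel _)

open Polynomial in
lemma poch_eq_smeval_descPochhammer (c : ℂ) (k : ℕ) :
    poch c k = (descPochhammer ℤ k).smeval (c + k - 1) := by
  rw [descPochhammer_smeval_eq_ascPochhammer, ascPochhammer_smeval_eq_eval,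
    show c + k - 1 - k + 1 = c by ring]
  induction k with
  | zero => simp [poch]
  | succ k ih => rw [poch_succ, ih, ascPochhammer_succ_eval]

/-- Chu–Vandermonde. -/
lemma sum_antidiagonal_choose_mul_poch (a b : ℂ) (n : ℕ) :
    ∑ p ∈ antidiagonal n, (n.choose p.1 : ℂ) * (poch (b + p.2) p.1 * poch (a + p.1) p.2) =
      poch (a + b + n - 1) n := by
  rw [poch_eq_smeval_descPochhammer, show a + b + n - 1 + n - 1 = b + n - 1 + (a + n - 1) by ring,
    Ring.descPochhammer_smeval_add n (Commute.all _ _)]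
  refine sum_congr rfl fun p hp => ?_
  rw [← HasAntidiagonal.mem_antidiagonal.mp hp, poch_eq_smeval_descPochhammer,
    poch_eq_smeval_descPochhammer]
  push_cast
  ring_nf

lemma sum_antidiagonal_inv_poch_mul_factorial {a b : ℂ} {n : ℕ} (ha : poch a n ≠ 0)
    (hb : poch b n ≠ 0) :
    ∑ p ∈ antidiagonal n, (poch a p.1 * p.1 !)⁻¹ * (poch b p.2 * p.2 !)⁻¹ =
      poch (a + b + n - 1) n / (poch a n * poch b n * n !) := by
  rw [← sum_antidiagonal_choose_mul_poch, sum_div]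
  refine sum_congr rfl fun p hp => ?_
  obtain rfl := HasAntidiagonal.mem_antidiagonal.mp hp
  rw [poch_add a p.1 p.2] at ha ⊢
  rw [add_comm p.1 p.2, poch_add b p.2 p.1] at hb ⊢
  rw [add_comm p.2 p.1, ← Nat.choose_mul_factorial_mul_factorial (Nat.le_add_right p.1 p.2),
    Nat.add_sub_cancel_left]
  obtain ⟨ha₁, ha₂⟩ := mul_ne_zero_iff.mp ha
  obtain ⟨hb₁, hb₂⟩ := mul_ne_zero_iff.mp hb
  have := Nat.cast_ne_zero (R := ℂ).mpr (Nat.choose_pos (Nat.le_add_right p.1 p.2)).ne'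
  have := Nat.cast_ne_zero (R := ℂ).mpr p.1.factorial_ne_zero
  have := Nat.cast_ne_zero (R := ℂ).mpr p.2.factorial_ne_zero
  push_cast
  field_simp

end Pochhammer

section TsumEval

/-- Junk value where the series diverges. -/
noncomputable def tsumEval (f : ℂ⟦X⟧) (x : ℂ) : ℂ := ∑' n, coeff n f * x ^ n

def AbsSummableAt (f : ℂ⟦X⟧) (x : ℂ) : Prop := Summable fun n => ‖coeff n f * x ^ n‖

variable {f g : ℂ⟦X⟧} {x : ℂ}

lemma AbsSummableAt.summable (hf : AbsSummableAt f x) : Summable fun n => coeff n f * x ^ n :=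
  Summable.of_norm hf

lemma sum_antidiagonal_coeff_mul_pow (f g : ℂ⟦X⟧) (x : ℂ) (n : ℕ) :
    ∑ p ∈ antidiagonal n, coeff p.1 f * x ^ p.1 * (coeff p.2 g * x ^ p.2) =
      coeff n (f * g) * x ^ n := by
  rw [coeff_mul, sum_mul]
  refine sum_congr rfl fun p hp => ?_
  rw [← HasAntidiagonal.mem_antidiagonal.mp hp, pow_add]
  ring

lemma AbsSummableAt.mul (hf : AbsSummableAt f x) (hg : AbsSummableAt g x) :
    AbsSummableAt (f * g) x :=
  (summable_norm_sum_mul_antidiagonal_of_summable_norm hf hg).congr fun n => by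
    rw [sum_antidiagonal_coeff_mul_pow]

lemma tsumEval_mul (hf : AbsSummableAt f x) (hg : AbsSummableAt g x) :
    tsumEval (f * g) x = tsumEval f x * tsumEval g x := by
  rw [tsumEval, tsumEval, tsumEval, tsum_mul_tsum_eq_tsum_sum_antidiagonal_of_summable_norm hf hg]
  simp only [sum_antidiagonal_coeff_mul_pow]

lemma AbsSummableAt.add (hf : AbsSummableAt f x) (hg : AbsSummableAt g x) :
    AbsSummableAt (f + g) x :=
  (Summable.add hf hg).of_nonneg_of_le (fun _ => norm_nonneg _) fun n => by
    rw [map_add, add_mul]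
    exact norm_add_le _ _

lemma AbsSummableAt.sum {ι : Type*} (s : Finset ι) {F : ι → ℂ⟦X⟧}
    (hF : ∀ m ∈ s, AbsSummableAt (F m) x) : AbsSummableAt (∑ m ∈ s, F m) x := by
  classical
  induction s using Finset.induction_on with
  | empty => simp [AbsSummableAt, summable_zero]
  | insert a s ha ih =>
    rw [sum_insert ha]
    exact (hF a (mem_insert_self a s)).add (ih fun m hm => hF m (mem_insert_of_mem hm))

lemma tsumEval_sum {ι : Type*} (s : Finset ι) {F : ι → ℂ⟦X⟧}
    (hF : ∀ m ∈ s, AbsSummableAt (F m) x) :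
    tsumEval (∑ m ∈ s, F m) x = ∑ m ∈ s, tsumEval (F m) x := by
  simp only [tsumEval, map_sum, sum_mul]
  exact Summable.tsum_finsetSum fun m hm => (hF m hm).summable

lemma tsumEval_C_mul_X_pow (a : ℂ) (m : ℕ) (x : ℂ) : tsumEval (C a * X ^ m) x = a * x ^ m := by
  rw [tsumEval, tsum_eq_single m fun n hn => by simp [coeff_X_pow, hn]]
  simp

lemma absSummableAt_C_mul_X_pow (a : ℂ) (m : ℕ) (x : ℂ) : AbsSummableAt (C a * X ^ m) x :=
  summable_of_ne_finset_zero (s := {m}) fun n hn => by simp_all [coeff_X_pow]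

lemma tsumEval_rescale (c : ℂ) (f : ℂ⟦X⟧) (x : ℂ) :
    tsumEval (rescale c f) x = tsumEval f (c * x) :=
  tsum_congr fun n => by rw [coeff_rescale, mul_pow]; ring

lemma AbsSummableAt.rescale {c : ℂ} (hf : AbsSummableAt f (c * x)) :
    AbsSummableAt (rescale c f) x :=
  hf.congr fun n => by rw [coeff_rescale, mul_pow]; ring_nf

lemma mem_range_two_mul_of_coeff_expand_ne_zero {n : ℕ}
    (h : coeff n (expand 2 two_ne_zero f) * x ^ n ≠ 0) : n ∈ Set.range (2 * ·) := by
  rw [coeff_expand] at h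
  split_ifs at h with h2
  · exact ⟨n / 2, Nat.mul_div_cancel' h2⟩
  · simp at h

lemma tsumEval_expand_two (f : ℂ⟦X⟧) (x : ℂ) :
    tsumEval (expand 2 two_ne_zero f) x = tsumEval f (x ^ 2) := by
  rw [tsumEval, ← (mul_right_injective₀ two_ne_zero).tsum_eq
    fun n hn => mem_range_two_mul_of_coeff_expand_ne_zero hn]
  simp [tsumEval, pow_mul]

lemma AbsSummableAt.expand_two (hf : AbsSummableAt f (x ^ 2)) :
    AbsSummableAt (expand 2 two_ne_zero f) x := by
  rw [AbsSummableAt, ← (mul_right_injective₀ two_ne_zero).summable_iff fun n hn =>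
    norm_eq_zero.mpr (not_not.mp fun h => hn (mem_range_two_mul_of_coeff_expand_ne_zero h))]
  exact hf.congr fun n => by simp [pow_mul]

lemma tsumEval_exp (x : ℂ) : tsumEval (exp ℂ) x = Complex.exp x := by
  simp [tsumEval, Complex.exp_eq_exp_ℂ, NormedSpace.exp_eq_tsum_div, div_eq_inv_mul]

lemma absSummableAt_exp (x : ℂ) : AbsSummableAt (exp ℂ) x :=
  (Real.summable_pow_div_factorial ‖x‖).congr fun n => by simp [div_eq_inv_mul]

lemma summable_norm_of_norm_succ_le {u : ℕ → ℂ} {C : ℝ} {K : ℕ}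
    (h : ∀ k ≥ K, ‖u (k + 1)‖ ≤ C / (k + 1) * ‖u k‖) : Summable fun k => ‖u k‖ := by
  refine summable_of_ratio_norm_eventually_le (r := 1 / 2) (by norm_num) ?_
  filter_upwards [Filter.eventually_ge_atTop (max K ⌈2 * C⌉₊)] with k hk
  have hC : 2 * C ≤ k + 1 := by
    have := (Nat.le_ceil (2 * C)).trans (Nat.cast_le.mpr (le_of_max_le_right hk))
    linarith
  simp only [norm_norm]
  refine (h k (le_of_max_le_left hk)).trans (mul_le_mul_of_nonneg_right ?_ (norm_nonneg _))
  rw [div_le_iff₀ (by positivity)]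
  linarith

end TsumEval

section Hypergeometric

noncomputable def hypSeries (a b : List ℂ) : ℂ⟦X⟧ :=
  mk fun k => (a.map (poch · k)).prod / (b.map (poch · k)).prod / k !

lemma pFq_eq_tsumEval (a b : List ℂ) (x : ℂ) : pFq a b x = tsumEval (hypSeries a b) x :=
  tsum_congr fun k => by rw [hypSeries, coeff_mk]; ring

lemma coeff_hypSeries_nil (γ : ℂ) (k : ℕ) :
    coeff k (hypSeries [] [γ]) = (poch γ k * k !)⁻¹ := by
  simp [hypSeries, div_eq_mul_inv, mul_comm]

lemma coeff_hypSeries_singleton (a b : ℂ) (k : ℕ) :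
    coeff k (hypSeries [a] [b]) = poch a k / (poch b k * k !) := by
  simp [hypSeries, div_div]

lemma absSummableAt_hypSeries_nil (γ w : ℂ) : AbsSummableAt (hypSeries [] [γ]) w := by
  refine summable_norm_of_norm_succ_le (C := ‖w‖) (K := ⌈‖γ‖⌉₊ + 1) fun k hk => ?_
  have hγk : 1 ≤ ‖γ + k‖ := by
    have : ((⌈‖γ‖⌉₊ + 1 : ℕ) : ℝ) ≤ k := by exact_mod_cast hk
    have := norm_sub_norm_le (k : ℂ) (-γ)
    rw [Complex.norm_natCast, norm_neg, sub_neg_eq_add, add_comm] at this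
    push_cast at *
    linarith [Nat.le_ceil ‖γ‖]
  have hsucc : (poch γ (k + 1) * (k + 1)!)⁻¹ * w ^ (k + 1) =
      ((γ + k)⁻¹ * w / (k + 1)) * ((poch γ k * k !)⁻¹ * w ^ k) := by
    rw [poch_succ, Nat.factorial_succ]
    push_cast
    field_simp
    ring
  rw [coeff_hypSeries_nil, coeff_hypSeries_nil, hsucc, norm_mul, norm_div, norm_mul, norm_inv,
    show ‖(k : ℂ) + 1‖ = k + 1 by exact_mod_cast Complex.norm_natCast (k + 1)]
  gcongr
  exact mul_le_of_le_one_left (norm_nonneg w) (inv_le_one_of_one_le₀ hγk)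

lemma hypSeries_nil_mul_hypSeries_nil {a b : ℂ} (ha : NotNonposInt a) (hb : NotNonposInt b)
    (hab : NotNonposInt (a + b - 1)) :
    hypSeries [] [a] * hypSeries [] [b] =
      rescale 4 (hypSeries [(a + b) / 2, (a + b - 1) / 2] [a, b, a + b - 1]) := by
  ext n
  have hdup : poch (a + b - 1) n * poch (a + b + n - 1) n =
      4 ^ n * poch ((a + b) / 2) n * poch ((a + b - 1) / 2) n := by
    rw [← show a + b - 1 + n = a + b + n - 1 by ring, ← poch_add, ← two_mul, poch_two_mul,
      show (a + b - 1 + 1) / 2 = (a + b) / 2 by ring]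
    ring
  have := poch_ne_zero ha n
  have := poch_ne_zero hb n
  have := poch_ne_zero hab n
  have := Nat.cast_ne_zero (R := ℂ).mpr n.factorial_ne_zero
  rw [coeff_mul, coeff_rescale]
  simp only [coeff_hypSeries_nil]
  rw [sum_antidiagonal_inv_poch_mul_factorial (poch_ne_zero ha n) (poch_ne_zero hb n)]
  simp only [hypSeries, coeff_mk, List.map_cons, List.map_nil, List.prod_cons, List.prod_nil,
    mul_one]
  field_simp
  linear_combination hdup

lemma pFq_nil_mul_pFq_nil {a b : ℂ} (ha : NotNonposInt a) (hb : NotNonposInt b)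
    (hab : NotNonposInt (a + b - 1)) (w : ℂ) :
    pFq [] [a] w * pFq [] [b] w =
      pFq [(a + b) / 2, (a + b - 1) / 2] [a, b, a + b - 1] (4 * w) := by
  rw [pFq_eq_tsumEval, pFq_eq_tsumEval, pFq_eq_tsumEval,
    ← tsumEval_mul (absSummableAt_hypSeries_nil a w) (absSummableAt_hypSeries_nil b w),
    hypSeries_nil_mul_hypSeries_nil ha hb hab, tsumEval_rescale]

lemma coeff_X_mul_derivative (f : ℂ⟦X⟧) (n : ℕ) : coeff n (X * d⁄dX ℂ f) = n * coeff n f := by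
  rcases n with _ | n
  · simp
  · rw [coeff_succ_X_mul, coeff_derivative]
    push_cast
    ring

lemma hypSeries_singleton_contiguous (a : ℂ) {b : ℂ} (hb : NotNonposInt b) :
    C b * hypSeries [a] [b] =
      C b * hypSeries [a] [b + 1] + X * d⁄dX ℂ (hypSeries [a] [b + 1]) := by
  ext n
  have := poch_ne_zero hb n
  have := poch_ne_zero hb.add_one n
  have := Nat.cast_ne_zero (R := ℂ).mpr n.factorial_ne_zero
  have e : poch b n * (b + n) = b * poch (b + 1) n := by rw [← poch_succ, poch_succ']
  rw [map_add, coeff_C_mul, coeff_C_mul, coeff_X_mul_derivative, coeff_hypSeries_singleton,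
    coeff_hypSeries_singleton]
  field_simp
  linear_combination (-poch a n) * e

lemma eq_hypSeries_singleton_of_kummer_ode {a b : ℂ} (hb : NotNonposInt b) {f : ℂ⟦X⟧}
    (h0 : coeff 0 f = 1)
    (hf : X * d⁄dX ℂ (d⁄dX ℂ f) + C b * d⁄dX ℂ f = X * d⁄dX ℂ f + C a * f) :
    f = hypSeries [a] [b] := by
  ext n
  induction n with
  | zero => simp [h0, coeff_hypSeries_singleton, poch]
  | succ n ih =>
    have hn := congrArg (coeff n) hf
    simp only [map_add, coeff_X_mul_derivative, coeff_C_mul, coeff_derivative, ih] at hn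
    have := poch_ne_zero hb n
    have := hb.add_natCast_ne_zero n
    have := Nat.cast_ne_zero (R := ℂ).mpr n.factorial_ne_zero
    have := Nat.cast_add_one_ne_zero (R := ℂ) n
    rw [coeff_hypSeries_singleton] at hn ⊢
    rw [poch_succ, poch_succ, Nat.factorial_succ, Nat.cast_mul, Nat.cast_add_one]
    field_simp at hn ⊢
    linear_combination hn

end Hypergeometric

section Kummer

noncomputable def expHalf : ℂ⟦X⟧ := rescale (1 / 2) (exp ℂ)

/-- The series of `₀F₁(; γ; x²/16)`. -/
noncomputable def besselSeries (γ : ℂ) : ℂ⟦X⟧ :=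
  expand 2 two_ne_zero (rescale (1 / 16) (hypSeries [] [γ]))

lemma tsumEval_expHalf (x : ℂ) : tsumEval expHalf x = Complex.exp (x / 2) := by
  rw [expHalf, tsumEval_rescale, tsumEval_exp, one_div_mul_eq_div]

lemma absSummableAt_expHalf (x : ℂ) : AbsSummableAt expHalf x :=
  AbsSummableAt.rescale (absSummableAt_exp _)

lemma tsumEval_besselSeries (γ x : ℂ) :
    tsumEval (besselSeries γ) x = pFq [] [γ] (x ^ 2 / 16) := by
  rw [besselSeries, tsumEval_expand_two, tsumEval_rescale, pFq_eq_tsumEval, one_div_mul_eq_div]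

lemma absSummableAt_besselSeries (γ x : ℂ) : AbsSummableAt (besselSeries γ) x :=
  AbsSummableAt.expand_two (AbsSummableAt.rescale (absSummableAt_hypSeries_nil _ _))

lemma coeff_besselSeries_two_mul (γ : ℂ) (s : ℕ) :
    coeff (2 * s) (besselSeries γ) = (1 / 16) ^ s * (poch γ s * s !)⁻¹ := by
  rw [besselSeries, coeff_expand_mul, coeff_rescale, coeff_hypSeries_nil]

lemma coeff_besselSeries_two_mul_add_one (γ : ℂ) (s : ℕ) :
    coeff (2 * s + 1) (besselSeries γ) = 0 :=
  coeff_expand_of_not_dvd _ _ _ (by omega)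

lemma derivative_expHalf : d⁄dX ℂ expHalf = C (1 / 2) * expHalf := by
  ext n
  simp [expHalf, coeff_derivative, Nat.factorial_succ, pow_succ]
  field_simp

lemma derivative_besselSeries (γ : ℂ) :
    d⁄dX ℂ (besselSeries γ) = C (8 * γ)⁻¹ * X * besselSeries (γ + 1) := by
  ext n
  rw [coeff_derivative, mul_assoc, coeff_C_mul]
  obtain ⟨s, rfl | rfl⟩ := Nat.even_or_odd' n
  · rw [coeff_besselSeries_two_mul_add_one, zero_mul]
    rcases s with _ | s
    · simp
    · rw [show 2 * (s + 1) = 2 * s + 1 + 1 by ring, coeff_succ_X_mul,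
        coeff_besselSeries_two_mul_add_one, mul_zero]
  · have h2 : ((s : ℂ) + 1)⁻¹ * (2 * s + 1 + 1) = 2 := by
      field_simp [Nat.cast_add_one_ne_zero s]
      ring
    have hsucc : (poch γ (s + 1) * (s + 1)!)⁻¹ =
        γ⁻¹ * ((s : ℂ) + 1)⁻¹ * (poch (γ + 1) s * s !)⁻¹ := by
      rw [poch_succ', Nat.factorial_succ, Nat.cast_mul, Nat.cast_add_one]
      simp only [mul_inv]
      ring
    rw [show 2 * s + 1 + 1 = 2 * (s + 1) by ring, coeff_succ_X_mul, coeff_besselSeries_two_mul,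
      coeff_besselSeries_two_mul, hsucc]
    push_cast
    linear_combination ((1 / 16) ^ (s + 1) * γ⁻¹ * (poch (γ + 1) s * s !)⁻¹) * h2

lemma besselSeries_sub_besselSeries_add_one {γ : ℂ} (hγ : NotNonposInt γ) :
    besselSeries γ - besselSeries (γ + 1) =
      C (16 * γ * (γ + 1))⁻¹ * X ^ 2 * besselSeries (γ + 2) := by
  ext n
  rw [map_sub, mul_assoc, coeff_C_mul, coeff_X_pow_mul']
  obtain ⟨s, rfl | rfl⟩ := Nat.even_or_odd' n
  · rcases s with _ | s
    · rw [coeff_besselSeries_two_mul, coeff_besselSeries_two_mul]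
      simp [poch]
    rw [if_pos (by omega), show 2 * (s + 1) - 2 = 2 * s by omega, coeff_besselSeries_two_mul,
      coeff_besselSeries_two_mul, coeff_besselSeries_two_mul]
    have := hγ.ne_zero
    have := hγ.ne_zero_of_eq 1 (z := γ + 1) (by simp)
    have hγs := hγ.ne_zero_of_eq (1 + s) (z := γ + 1 + s) (by push_cast; ring)
    have := poch_ne_zero (hγ.of_eq_add_natCast 2 (z := γ + 2) (by simp)) s
    have := Nat.cast_add_one_ne_zero (R := ℂ) s
    have := Nat.cast_ne_zero (R := ℂ).mpr s.factorial_ne_zero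
    have e0 : poch γ (s + 1) = γ * (γ + 1) * poch (γ + 2) s / (γ + 1 + s) := by
      rw [eq_div_iff hγs, poch_succ', mul_assoc, ← poch_succ, poch_succ',
        show γ + 1 + 1 = γ + 2 by ring]
      ring
    rw [e0, poch_succ', show γ + 1 + 1 = γ + 2 by ring, Nat.factorial_succ]
    push_cast
    field_simp
    ring
  · rw [coeff_besselSeries_two_mul_add_one, coeff_besselSeries_two_mul_add_one, sub_zero]
    split_ifs
    · rw [show 2 * s + 1 - 2 = 2 * (s - 1) + 1 by omega, coeff_besselSeries_two_mul_add_one,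
        mul_zero]
    · rw [mul_zero]

lemma besselSeries_ode {γ : ℂ} (hγ : NotNonposInt γ) :
    X * d⁄dX ℂ (d⁄dX ℂ (besselSeries γ)) + C (2 * γ - 1) * d⁄dX ℂ (besselSeries γ) =
      C (1 / 4) * X * besselSeries γ := by
  ext n
  rw [map_add, coeff_X_mul_derivative, coeff_C_mul, coeff_derivative, mul_assoc, coeff_C_mul]
  obtain ⟨s, rfl | rfl⟩ := Nat.even_or_odd' n
  · rw [coeff_besselSeries_two_mul_add_one]
    rcases s with _ | s
    · simp
    · rw [show 2 * (s + 1) = 2 * s + 1 + 1 by ring, coeff_succ_X_mul,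
        coeff_besselSeries_two_mul_add_one]
      ring
  · rw [show 2 * s + 1 + 1 = 2 * (s + 1) by ring, coeff_succ_X_mul, coeff_besselSeries_two_mul,
      coeff_besselSeries_two_mul, poch_succ, Nat.factorial_succ]
    have := poch_ne_zero hγ s
    have := hγ.add_natCast_ne_zero s
    have := Nat.cast_add_one_ne_zero (R := ℂ) s
    have := Nat.cast_ne_zero (R := ℂ).mpr s.factorial_ne_zero
    push_cast
    field_simp
    ring

/-- Kummer's second theorem. -/
lemma hypSeries_two_mul_eq_expHalf_mul {a : ℂ} (h2a : NotNonposInt (2 * a))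
    (ha : NotNonposInt (a + 1 / 2)) :
    hypSeries [a] [2 * a] = expHalf * besselSeries (a + 1 / 2) := by
  symm
  apply eq_hypSeries_singleton_of_kummer_ode h2a
  · have h := coeff_besselSeries_two_mul (a + 1 / 2) 0
    simp only [mul_zero, pow_zero, poch, range_zero, prod_empty, Nat.factorial_zero,
      Nat.cast_one, mul_one, inv_one] at h
    simpa [coeff_mul, expHalf] using h
  have hB := besselSeries_ode ha
  rw [show 2 * (a + 1 / 2) - 1 = 2 * a by ring] at hB
  set B := besselSeries (a + 1 / 2)
  have hh : C (1 / 2 : ℂ) * 2 = 1 := by rw [← map_ofNat C 2, ← map_mul]; norm_num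
  have hq : C (1 / 4 : ℂ) = C (1 / 2) * C (1 / 2) := by rw [← map_mul]; norm_num
  have h2 : C (2 * a) = 2 * C a := by rw [map_mul, map_ofNat]
  simp only [Derivation.leibniz, smul_eq_mul, map_add, derivative_C, derivative_expHalf, hq,
    h2] at hB ⊢
  linear_combination expHalf * hB +
    (C (1 / 2) * X * expHalf * B + X * expHalf * d⁄dX ℂ B + C a * expHalf * B) * hh

end Kummer

section Expansion

noncomputable def kummerCoeff (α : ℂ) (i m : ℕ) : ℂ :=
  (-1) ^ m * poch (-(i : ℂ)) m * poch (2 * α - 2 * i - 1) m /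
    (poch (2 * α - i) m * poch (α - i - 1 / 2) m * 2 ^ (2 * m) * m !)

lemma kummerCoeff_zero (α : ℂ) (i : ℕ) : kummerCoeff α i 0 = 1 := by
  simp [kummerCoeff, poch]

lemma kummerCoeff_eq_zero_of_lt (α : ℂ) {i m : ℕ} (h : i < m) : kummerCoeff α i m = 0 := by
  simp [kummerCoeff, poch_neg_natCast_of_lt h]

lemma kummerCoeff_succ (α : ℂ) (i u : ℕ) :
    kummerCoeff α i (u + 1) = kummerCoeff α i u *
      ((i - u) * (2 * α - 2 * i - 1 + u) /
        (4 * (2 * α - i + u) * (α - i - 1 / 2 + u) * (u + 1))) := by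
  rw [kummerCoeff, kummerCoeff, div_mul_div_comm, poch_succ, poch_succ, poch_succ, poch_succ,
    Nat.factorial_succ, mul_add, pow_add]
  push_cast
  ring

lemma kummerCoeff_succ_add_two (α : ℂ) (i u : ℕ) :
    kummerCoeff α (i + 1) (u + 2) = kummerCoeff α i u *
      ((i + 1) * (i - u) * (2 * α - 2 * i - 3) * (2 * α - 2 * i - 2) /
        (16 * (2 * α - i - 1) * (2 * α - i + u) * (α - i - 3 / 2) * (α - i - 1 / 2 + u) *
          ((u + 1) * (u + 2)))) := by
  have e1 : poch (-((i + 1 : ℕ) : ℂ)) (u + 2) = (-i - 1) * (poch (-i) u * (-i + u)) := by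
    rw [show -((i + 1 : ℕ) : ℂ) = -(i : ℂ) - 1 by push_cast; ring, poch_sub_one_add_two]
  have e2 : poch (2 * α - 2 * ((i + 1 : ℕ) : ℂ) - 1) (u + 2) =
      (2 * α - 2 * i - 3) * (2 * α - 2 * i - 2) * poch (2 * α - 2 * i - 1) u := by
    rw [show 2 * α - 2 * ((i + 1 : ℕ) : ℂ) - 1 = (2 * α - 2 * i - 1) - 2 by push_cast; ring,
      poch_sub_two_add_two]
    ring_nf
  have e3 : poch (2 * α - ((i + 1 : ℕ) : ℂ)) (u + 2) =
      (2 * α - i - 1) * (poch (2 * α - i) u * (2 * α - i + u)) := by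
    rw [show 2 * α - ((i + 1 : ℕ) : ℂ) = (2 * α - i) - 1 by push_cast; ring,
      poch_sub_one_add_two]
  have e4 : poch (α - ((i + 1 : ℕ) : ℂ) - 1 / 2) (u + 2) =
      (α - i - 3 / 2) * (poch (α - i - 1 / 2) u * (α - i - 1 / 2 + u)) := by
    rw [show α - ((i + 1 : ℕ) : ℂ) - 1 / 2 = (α - i - 1 / 2) - 1 by push_cast; ring,
      poch_sub_one_add_two]
    ring_nf
  rw [kummerCoeff, kummerCoeff, e1, e2, e3, e4, div_mul_div_comm, Nat.factorial_succ,
    Nat.factorial_succ, show 2 * (u + 2) = 2 * u + 4 by ring, pow_add]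
  push_cast
  congr 1 <;> ring

/- The next two identities are `kummerCoeff_recurrence_one` and `kummerCoeff_recurrence_add_two`
divided by `kummerCoeff α i 0`, resp. `kummerCoeff α i u`, and written in `c = α - i - 1/2`: then
every denominator is a product of the factors assumed nonzero, whereas in terms of `α` they hide
behind halves that `field_simp` does not cancel. -/

lemma recurrence_one_ratio (c i : ℂ) (h1 : 2 * c + i ≠ 0) (h2 : 2 * c + i + 1 ≠ 0)
    (h3 : c - 1 ≠ 0) (h4 : c ≠ 0) :
    (2 * c + i) * ((i + 1) * (2 * c - 2) / (4 * (2 * c + i) * (c - 1))) =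
      (2 * c + i + 1) * (i * (2 * c) / (4 * (2 * c + i + 1) * c)) + 1 / 2 := by
  field_simp
  ring

lemma recurrence_add_two_ratio (c i u : ℂ) (h1 : 2 * c + i ≠ 0) (h2 : 2 * c + i + 1 + u ≠ 0)
    (h3 : 2 * c + i + 2 + u ≠ 0) (h4 : c - 1 ≠ 0) (h5 : c + u ≠ 0) (h6 : c + u + 1 ≠ 0)
    (h7 : u + 1 ≠ 0) (h8 : u + 2 ≠ 0) :
    (2 * c + i) * ((i + 1) * (i - u) * (2 * c - 2) * (2 * c - 1) /
        (16 * (2 * c + i) * (2 * c + i + 1 + u) * (c - 1) * (c + u) * ((u + 1) * (u + 2)))) =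
      (2 * c + i + u + 2) * ((i - u) * (2 * c + u) / (4 * (2 * c + i + 1 + u) * (c + u) * (u + 1)) *
        ((i - u - 1) * (2 * c + u + 1) / (4 * (2 * c + i + 2 + u) * (c + u + 1) * (u + 2)))) +
      (i - u) * (2 * c + u) / (4 * (2 * c + i + 1 + u) * (c + u) * (u + 1)) / 2 +
      ((8 * (c + u + 1))⁻¹ - (2 * c + i + u) * (16 * (c + u) * (c + u + 1))⁻¹) := by
  field_simp
  ring

lemma kummerCoeff_recurrence_one (α : ℂ) (i : ℕ) (hβ : NotNonposInt (2 * α - i - 1))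
    (hc : NotNonposInt (α - i - 3 / 2)) :
    (2 * α - i - 1) * kummerCoeff α (i + 1) 1 =
      (2 * α - i - 1 + 1) * kummerCoeff α i 1 + kummerCoeff α i 0 / 2 := by
  have key := recurrence_one_ratio (α - i - 1 / 2) i (hβ.ne_zero_of_eq 0 (by push_cast; ring))
    (hβ.ne_zero_of_eq 1 (by push_cast; ring)) (hc.ne_zero_of_eq 0 (by push_cast; ring))
    (hc.ne_zero_of_eq 1 (by push_cast; ring))
  rw [kummerCoeff_succ, kummerCoeff_succ, kummerCoeff_zero, kummerCoeff_zero]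
  push_cast
  linear_combination key

lemma kummerCoeff_recurrence_add_two (α : ℂ) (i u : ℕ) (hβ : NotNonposInt (2 * α - i - 1))
    (hc : NotNonposInt (α - i - 3 / 2)) :
    (2 * α - i - 1) * kummerCoeff α (i + 1) (u + 2) =
      (2 * α - i - 1 + (u + 2 : ℕ)) * kummerCoeff α i (u + 2) + kummerCoeff α i (u + 1) / 2 +
      (kummerCoeff α i u * (8 * (α + u - i + 1 / 2))⁻¹ - (2 * α - i - 1 + u) * kummerCoeff α i u *
        (16 * (α + u - i + 1 / 2 - 1) * (α + u - i + 1 / 2))⁻¹) := by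
  have key := recurrence_add_two_ratio (α - i - 1 / 2) i u
    (hβ.ne_zero_of_eq 0 (by push_cast; ring)) (hβ.ne_zero_of_eq (u + 1) (by push_cast; ring))
    (hβ.ne_zero_of_eq (u + 2) (by push_cast; ring)) (hc.ne_zero_of_eq 0 (by push_cast; ring))
    (hc.ne_zero_of_eq (u + 1) (by push_cast; ring)) (hc.ne_zero_of_eq (u + 2) (by push_cast; ring))
    (Nat.cast_add_one_ne_zero u) (by exact_mod_cast (show u + 2 ≠ 0 by omega))
  rw [kummerCoeff_succ_add_two, kummerCoeff_succ _ i (u + 1), kummerCoeff_succ _ i u]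
  push_cast
  linear_combination kummerCoeff α i u * key

noncomputable def besselSum (α : ℂ) (i : ℕ) : ℂ⟦X⟧ :=
  ∑ m ∈ range (i + 1), C (kummerCoeff α i m) * X ^ m * besselSeries (α + m - i + 1 / 2)

lemma X_mul_derivative_X_pow_mul (m : ℕ) (f : ℂ⟦X⟧) :
    X * d⁄dX ℂ (X ^ m * f) = C (m : ℂ) * X ^ m * f + X ^ (m + 1) * d⁄dX ℂ f := by
  rw [Derivation.leibniz, smul_eq_mul, smul_eq_mul, derivative_pow, derivative_X, map_natCast]
  rcases m with _ | m
  · simp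
  · rw [Nat.add_sub_cancel, pow_succ, pow_succ]
    push_cast
    ring

/-- `y ↦ β y + X (y/2 + y')` is `y ↦ β y + X y'` conjugated by `e^{X/2}`; this is its action on one
term of `besselSum`. -/
lemma besselSum_term_succ (β d γ : ℂ) (m : ℕ) (hγ : NotNonposInt (γ - 1)) :
    C β * (C d * X ^ m * besselSeries γ) +
        X * (C (1 / 2) * (C d * X ^ m * besselSeries γ) + d⁄dX ℂ (C d * X ^ m * besselSeries γ)) =
      C ((β + m) * d) * (X ^ m * besselSeries (γ - 1)) +
        C (d * (1 / 2)) * (X ^ (m + 1) * besselSeries γ) +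
        C (d * (8 * γ)⁻¹ - (β + m) * d * (16 * (γ - 1) * γ)⁻¹) *
          (X ^ (m + 2) * besselSeries (γ + 1)) := by
  have hc := besselSeries_sub_besselSeries_add_one hγ
  rw [sub_add_cancel, show γ - 1 + 2 = γ + 1 by ring] at hc
  have hX : X * d⁄dX ℂ (C d * X ^ m * besselSeries γ) =
      C d * (C (m : ℂ) * X ^ m * besselSeries γ + X ^ (m + 1) * d⁄dX ℂ (besselSeries γ)) := by
    rw [mul_assoc, Derivation.leibniz, derivative_C, smul_zero, add_zero, smul_eq_mul,
      mul_left_comm, X_mul_derivative_X_pow_mul]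
  rw [mul_add X, hX, derivative_besselSeries]
  simp only [map_add, map_sub, map_mul]
  linear_combination (-(C β + C (m : ℂ)) * C d * X ^ m) * hc

lemma sum_range_add_three_eq {M : Type*} [AddCommMonoid M] (n : ℕ) {A B E F : ℕ → M}
    (h0 : F 0 = A 0) (h1 : F 1 = A 1 + B 0)
    (h2 : ∀ u, F (u + 2) = A (u + 2) + B (u + 1) + E u) :
    ∑ u ∈ range (n + 3), F u =
      ∑ u ∈ range (n + 3), A u + ∑ u ∈ range (n + 2), B u + ∑ u ∈ range (n + 1), E u := by
  rw [sum_range_succ', sum_range_succ', sum_range_succ' A, sum_range_succ' (A <| · + 1),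
    sum_range_succ' B]
  simp only [h0, h1, h2, sum_add_distrib]
  abel

lemma besselSum_succ {α : ℂ} {i : ℕ} (hβ : NotNonposInt (2 * α - i - 1))
    (hc : NotNonposInt (α - i - 3 / 2)) :
    C (2 * α - i - 1) * besselSum α i +
        X * (C (1 / 2) * besselSum α i + d⁄dX ℂ (besselSum α i)) =
      C (2 * α - i - 1) * besselSum α (i + 1) := by
  set T : ℕ → ℂ⟦X⟧ := fun u => X ^ u * besselSeries (α + u - (i + 1 : ℕ) + 1 / 2) with hT
  set A : ℕ → ℂ⟦X⟧ := fun u => C ((2 * α - i - 1 + u) * kummerCoeff α i u) * T u with hA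
  set B : ℕ → ℂ⟦X⟧ := fun u => C (kummerCoeff α i u * (1 / 2)) * T (u + 1) with hB
  set E : ℕ → ℂ⟦X⟧ := fun u => C (kummerCoeff α i u * (8 * (α + u - i + 1 / 2))⁻¹ -
    (2 * α - i - 1 + u) * kummerCoeff α i u *
      (16 * (α + u - i + 1 / 2 - 1) * (α + u - i + 1 / 2))⁻¹) * T (u + 2) with hE
  have hterm (m : ℕ) :
      C (2 * α - i - 1) * (C (kummerCoeff α i m) * X ^ m * besselSeries (α + m - i + 1 / 2)) +
        X * (C (1 / 2) * (C (kummerCoeff α i m) * X ^ m * besselSeries (α + m - i + 1 / 2)) +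
          d⁄dX ℂ (C (kummerCoeff α i m) * X ^ m * besselSeries (α + m - i + 1 / 2))) =
        A m + B m + E m := by
    rw [besselSum_term_succ _ _ _ _ (hc.of_eq_add_natCast (m + 1) (by push_cast; ring))]
    simp only [A, B, E, hT]
    congr 4 <;> push_cast <;> ring_nf
  have hvanish (u : ℕ) (hu : i < u) : kummerCoeff α i u = 0 := kummerCoeff_eq_zero_of_lt α hu
  calc _ = ∑ m ∈ range (i + 1), (A m + B m + E m) := by
        simp only [besselSum, map_sum, mul_sum, ← sum_add_distrib]
        exact sum_congr rfl fun m _ => hterm m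
    _ = ∑ u ∈ range (i + 3), A u + ∑ u ∈ range (i + 2), B u + ∑ u ∈ range (i + 1), E u := by
        rw [sum_add_distrib, sum_add_distrib, sum_range_succ A (i + 2), sum_range_succ A (i + 1),
          sum_range_succ B (i + 1)]
        simp [A, B, hvanish]
    _ = ∑ u ∈ range (i + 3), C ((2 * α - i - 1) * kummerCoeff α (i + 1) u) * T u := by
        refine (sum_range_add_three_eq i ?_ ?_ fun u => ?_).symm
        · simp [A, kummerCoeff_zero]
        · rw [hA, hB, ← add_mul, ← map_add, kummerCoeff_recurrence_one α i hβ hc]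
          push_cast
          ring_nf
        · rw [hA, hB, hE, show u + 1 + 1 = u + 2 from rfl, ← add_mul, ← add_mul, ← map_add,
            ← map_add, kummerCoeff_recurrence_add_two α i u hβ hc]
          push_cast
          ring_nf
    _ = C (2 * α - i - 1) * besselSum α (i + 1) := by
        rw [sum_range_succ, kummerCoeff_eq_zero_of_lt α (by omega : i + 1 < i + 2)]
        simp [besselSum, mul_sum, T, mul_assoc]

lemma hypSeries_eq_expHalf_mul_besselSum {α : ℂ} {i : ℕ} (h2α : NotNonposInt (2 * α - i))
    (hα : NotNonposInt (α + 1 / 2)) (hc : ∀ k < i, NotNonposInt (α - k - 3 / 2)) :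
    hypSeries [α] [2 * α - i] = expHalf * besselSum α i := by
  induction i with
  | zero =>
    simp only [Nat.cast_zero, sub_zero] at h2α ⊢
    simp [besselSum, kummerCoeff_zero, hypSeries_two_mul_eq_expHalf_mul h2α hα]
  | succ i ih =>
    have hβ : NotNonposInt (2 * α - i - 1) := by simpa [sub_sub] using h2α
    have hrec := hypSeries_singleton_contiguous α hβ
    rw [show 2 * α - i - 1 + 1 = 2 * α - i by ring,
      ih (hβ.of_eq_add_natCast 1 (by push_cast; ring)) fun k hk => hc k (by omega),
      Derivation.leibniz, derivative_expHalf, smul_eq_mul, smul_eq_mul] at hrec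
    refine mul_left_cancel₀ ((map_ne_zero_iff C C_injective).mpr hβ.ne_zero) ?_
    rw [show 2 * α - ((i + 1 : ℕ) : ℂ) = 2 * α - i - 1 by push_cast; ring, hrec]
    linear_combination expHalf * besselSum_succ hβ (hc i (lt_add_one i))

lemma absSummableAt_C_mul_X_pow_mul_besselSeries (a γ x : ℂ) (m : ℕ) :
    AbsSummableAt (C a * X ^ m * besselSeries γ) x :=
  (absSummableAt_C_mul_X_pow a m x).mul (absSummableAt_besselSeries γ x)

lemma pFq_eq_exp_mul_sum {α : ℂ} {i : ℕ} (h2α : NotNonposInt (2 * α - i))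
    (hα : NotNonposInt (α + 1 / 2)) (hc : ∀ k < i, NotNonposInt (α - k - 3 / 2)) (x : ℂ) :
    pFq [α] [2 * α - i] x = Complex.exp (x / 2) *
      ∑ m ∈ range (i + 1), kummerCoeff α i m * x ^ m * pFq [] [α + m - i + 1 / 2] (x ^ 2 / 16) := by
  have hterms : ∀ m ∈ range (i + 1),
      AbsSummableAt (C (kummerCoeff α i m) * X ^ m * besselSeries (α + m - i + 1 / 2)) x :=
    fun m _ => absSummableAt_C_mul_X_pow_mul_besselSeries _ _ x m
  rw [pFq_eq_tsumEval, hypSeries_eq_expHalf_mul_besselSum h2α hα hc, besselSum,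
    tsumEval_mul (absSummableAt_expHalf x) (AbsSummableAt.sum _ hterms), tsumEval_expHalf,
    tsumEval_sum _ hterms]
  congr 1
  refine sum_congr rfl fun m _ => ?_
  rw [tsumEval_mul (absSummableAt_C_mul_X_pow _ m x) (absSummableAt_besselSeries _ x),
    tsumEval_C_mul_X_pow, tsumEval_besselSeries]

end Expansion

lemma notNonposInt_sub_three_halves {α : ℂ} {i : ℕ} (h2α : NotNonposInt (2 * α - i))
    (hpoch : ∀ m ≤ i, poch (α - i - 1 / 2) m ≠ 0) (k : ℕ) (hk : k < i) :
    NotNonposInt (α - k - 3 / 2) := by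
  suffices h : NotNonposInt (α - i - 1 / 2) from
    h.of_eq_add_natCast (i - (k + 1)) (by push_cast [Nat.cast_sub hk]; ring)
  intro n hn
  rcases lt_or_ge n i with hni | hin
  · exact hpoch (n + 1) hni (prod_eq_zero (self_mem_range_succ n) (by rw [hn]; ring))
  · refine h2α (2 * n - (i + 1)) ?_
    push_cast [Nat.cast_sub (show i + 1 ≤ 2 * n by omega)]
    linear_combination 2 * hn

lemma kummerTerm_mul_kummerTerm {α β : ℂ} {i j m n : ℕ} (x : ℂ)
    (ha : NotNonposInt (α + m - i + 1 / 2)) (hb : NotNonposInt (β + n - j + 1 / 2))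
    (hab : NotNonposInt (α + β + m + n - i - j)) :
    kummerCoeff α i m * x ^ m * pFq [] [α + m - i + 1 / 2] (x ^ 2 / 16) *
        (kummerCoeff β j n * x ^ n * pFq [] [β + n - j + 1 / 2] (x ^ 2 / 16)) =
      ((-1) ^ (m + n) * poch (-(i : ℂ)) m * poch (-(j : ℂ)) n
          * poch (2 * α - 2 * i - 1) m * poch (2 * β - 2 * j - 1) n * x ^ (m + n)) /
        (poch (2 * α - i) m * poch (2 * β - j) n * poch (α - i - 1 / 2) m * poch (β - j - 1 / 2) n
          * 2 ^ (2 * m + 2 * n) * (Nat.factorial m) * (Nat.factorial n)) *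
      pFq [(α + β + m + n - i - j + 1) / 2, (α + β + m + n - i - j) / 2]
          [α + m - i + 1 / 2, β + n - j + 1 / 2, α + β + m + n - i - j] (x ^ 2 / 4) := by
  have hprod := pFq_nil_mul_pFq_nil ha hb (hab.of_eq_add_natCast 0 (by push_cast; ring))
    (x ^ 2 / 16)
  rw [show (α + m - i + 1 / 2 + (β + n - j + 1 / 2)) / 2 = (α + β + m + n - i - j + 1) / 2 by ring,
    show α + m - i + 1 / 2 + (β + n - j + 1 / 2) - 1 = α + β + m + n - i - j by ring,
    show 4 * (x ^ 2 / 16) = x ^ 2 / 4 by ring] at hprod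
  rw [mul_mul_mul_comm, hprod, kummerCoeff, kummerCoeff]
  simp only [div_eq_mul_inv, mul_inv, pow_add]
  ring

end Bailey

theorem bailey_generalization_2_2 (i j : ℕ) (x α β : ℂ)
    (h1 : NotNonposInt (2*α - i)) (h2 : NotNonposInt (2*β - j))
    (h3 : ∀ m : ℕ, m ≤ i → NotNonposInt (α + m - i + 1/2))
    (h4 : ∀ n : ℕ, n ≤ j → NotNonposInt (β + n - j + 1/2))
    (h5 : ∀ m n : ℕ, m ≤ i → n ≤ j → NotNonposInt (α + β + m + n - i - j))
    (h6 : ∀ m : ℕ, m ≤ i → poch (α - i - 1/2) m ≠ 0)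
    (h7 : ∀ n : ℕ, n ≤ j → poch (β - j - 1/2) n ≠ 0) :
    pFq [α] [2*α - i] x * pFq [β] [2*β - j] x =
      Complex.exp x *
        ∑ m ∈ Finset.range (i+1), ∑ n ∈ Finset.range (j+1),
          ((-1) ^ (m+n) * poch (-(i:ℂ)) m * poch (-(j:ℂ)) n
              * poch (2*α - 2*i - 1) m * poch (2*β - 2*j - 1) n * x ^ (m+n)) /
            (poch (2*α - i) m * poch (2*β - j) n * poch (α - i - 1/2) m * poch (β - j - 1/2) n
              * 2 ^ (2*m + 2*n) * (Nat.factorial m) * (Nat.factorial n)) *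
          pFq [(α+β+m+n-i-j+1)/2, (α+β+m+n-i-j)/2]
              [α+m-i+1/2, β+n-j+1/2, α+β+m+n-i-j] (x^2/4) := by
  have hα : NotNonposInt (α + 1 / 2) := by simpa using h3 i le_rfl
  have hβ : NotNonposInt (β + 1 / 2) := by simpa using h4 j le_rfl
  rw [Bailey.pFq_eq_exp_mul_sum h1 hα (Bailey.notNonposInt_sub_three_halves h1 h6),
    Bailey.pFq_eq_exp_mul_sum h2 hβ (Bailey.notNonposInt_sub_three_halves h2 h7),
    mul_mul_mul_comm, ← Complex.exp_add, add_halves, Finset.sum_mul_sum]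
  congr 1
  refine Finset.sum_congr rfl fun m hm => Finset.sum_congr rfl fun n hn => ?_
  rw [Finset.mem_range, Nat.lt_succ_iff] at hm hn
  exact Bailey.kummerTerm_mul_kummerTerm x (h3 m hm) (h4 n hn) (h5 m n hm hn)
end

section
/- Let x be a complex number and ρ, σ complex numbers such that none of ρ, σ, and ρ+σ−1 is a nonpositive integer. Then ₀F₁(—; ρ; x) · ₀F₁(—; σ; x) = ₂F₃((ρ+σ)/2, (ρ+σ−1)/2; ρ, σ, ρ+σ−1; 4x). -/
lemma poch_zero (c : ℂ) : poch c 0 = 1 := by simp [poch]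

lemma poch_succ (c : ℂ) (k : ℕ) : poch c (k+1) = poch c k * (c + k) := by
  simp [poch, Finset.prod_range_succ]

lemma poch_add (c : ℂ) (m n : ℕ) : poch c (m+n) = poch c m * poch (c+m) n := by
  rw [poch, poch, poch, Finset.prod_range_add]
  congr 1
  refine Finset.prod_congr rfl fun l _ => ?_
  push_cast; ring

lemma poch_ne_zero {c : ℂ} (h : NotNonposInt c) (k : ℕ) : poch c k ≠ 0 := by
  refine Finset.prod_ne_zero_iff.2 fun l _ => ?_
  intro hl
  exact h l (by linear_combination hl)

noncomputable def desc (c : ℂ) (k : ℕ) : ℂ := ∏ l ∈ Finset.range k, (c - l)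

lemma desc_succ (c : ℂ) (k : ℕ) : desc c (k+1) = desc c k * (c - k) := by
  simp [desc, Finset.prod_range_succ]

lemma desc_vand (n : ℕ) (s t : ℂ) :
    ∑ k ∈ Finset.range (n+1), (n.choose k : ℂ) * (desc s k * desc t (n-k)) = desc (s+t) n := by
  induction n with
  | zero => simp [desc]
  | succ n ih =>
    have h0 : ∀ k : ℕ, (((n+1).choose (k+1) : ℕ) : ℂ) = n.choose k + n.choose (k+1) := by
      intro k; rw [Nat.choose_succ_succ]; push_cast; ring
    rw [Finset.sum_range_succ']
    simp only [Nat.succ_sub_succ, h0, Nat.choose_zero_right, Nat.cast_one, Nat.sub_zero]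
    simp only [add_mul, Finset.sum_add_distrib]
    have hB : ∑ k ∈ Finset.range (n+1), (n.choose (k+1) : ℂ) * (desc s (k+1) * desc t (n-k))
        + 1 * (desc s 0 * desc t (n+1))
        = ∑ k ∈ Finset.range (n+1), (n.choose k : ℂ) * (desc s k * desc t (n+1-k)) := by
      rw [Finset.sum_range_succ' (fun k => (n.choose k : ℂ) * (desc s k * desc t (n+1-k))) n,
        Finset.sum_range_succ]
      simp [Nat.succ_sub_succ, Nat.choose_succ_self]
    rw [add_assoc, hB]
    have key : ∀ k ∈ Finset.range (n+1),
        (n.choose k : ℂ) * (desc s (k+1) * desc t (n-k))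
        + (n.choose k : ℂ) * (desc s k * desc t (n+1-k))
        = (s + t - n) * ((n.choose k : ℂ) * (desc s k * desc t (n-k))) := by
      intro k hk
      have hkn : k ≤ n := Nat.lt_succ_iff.mp (Finset.mem_range.mp hk)
      have h1 : n + 1 - k = (n - k) + 1 := by omega
      have h2 : ((n - k : ℕ) : ℂ) = (n : ℂ) - k := by
        push_cast [Nat.cast_sub hkn]; ring
      rw [h1, desc_succ, desc_succ, h2]
      ring
    rw [← Finset.sum_add_distrib, Finset.sum_congr rfl key, ← Finset.mul_sum, ih, desc_succ]
    ring

lemma poch_eq_desc (c : ℂ) (k : ℕ) : poch c k = desc (c + k - 1) k := by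
  induction k generalizing c with
  | zero => simp [poch_zero, desc]
  | succ k ih =>
    have hr : desc (c + ((k:ℂ)+1) - 1) (k+1) = desc (c + k - 1) k * (c + k) := by
      rw [desc, Finset.prod_range_succ', desc]
      congr 1
      · refine Finset.prod_congr rfl fun l _ => ?_
        push_cast; ring
      · push_cast; ring
    push_cast
    rw [poch_succ, ih, hr]

lemma poch_vand (n : ℕ) (a b : ℂ) :
    ∑ k ∈ Finset.range (n+1), (n.choose k : ℂ) * (poch (a+k) (n-k) * poch (b+(n-k)) k)
      = poch (a+b+n-1) n := by
  have h1 : ∀ k ∈ Finset.range (n+1),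
      (n.choose k : ℂ) * (poch (a+k) (n-k) * poch (b+(n-k)) k)
      = (n.choose k : ℂ) * (desc (b+n-1) k * desc (a+n-1) (n-k)) := by
    intro k hk
    have hkn : k ≤ n := Nat.lt_succ_iff.mp (Finset.mem_range.mp hk)
    have h2 : ((n - k : ℕ) : ℂ) = (n : ℂ) - k := by push_cast [Nat.cast_sub hkn]; ring
    rw [poch_eq_desc, poch_eq_desc, h2]
    rw [show a + (k:ℂ) + ((n:ℂ) - k) - 1 = a + n - 1 by ring,
      show b + ((n:ℂ) - k) + (k:ℂ) - 1 = b + n - 1 by ring]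
    ring
  rw [Finset.sum_congr rfl h1, desc_vand, poch_eq_desc]
  congr 1
  ring

lemma poch_dup (c : ℂ) (n : ℕ) :
    poch c (2*n) = 4^n * (poch (c/2) n * poch ((c+1)/2) n) := by
  induction n with
  | zero => simp [poch_zero]
  | succ n ih =>
    rw [show 2*(n+1) = 2*n+1+1 by ring, poch_succ, poch_succ, ih, poch_succ, poch_succ]
    push_cast
    ring

lemma notNonposInt_add_nat {c : ℂ} (h : NotNonposInt c) (k : ℕ) : NotNonposInt (c + k) := by
  intro m hm
  refine h (m + k) ?_
  push_cast
  linear_combination hm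

lemma hsum (c : ℂ) (hc : NotNonposInt c) (x : ℂ) :
    Summable (fun k : ℕ => ‖1 / poch c k * x ^ k / (Nat.factorial k : ℂ)‖) := by
  set f : ℕ → ℂ := fun k => 1 / poch c k * x ^ k / (Nat.factorial k : ℂ) with hf
  refine summable_of_ratio_norm_eventually_le (r := 1/2) (by norm_num) ?_
  rw [Filter.eventually_atTop]
  refine ⟨⌈‖c‖ + 2 * ‖x‖⌉₊ + 1, fun k hk => ?_⟩
  have hkR : (k : ℝ) ≥ ‖c‖ + 2 * ‖x‖ + 1 := by
    have h1 : ‖c‖ + 2 * ‖x‖ ≤ (⌈‖c‖ + 2 * ‖x‖⌉₊ : ℝ) := Nat.le_ceil _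
    have h2 : ((⌈‖c‖ + 2 * ‖x‖⌉₊ + 1 : ℕ) : ℝ) ≤ k := by exact_mod_cast hk
    push_cast at h2
    linarith
  have hpk : poch c k ≠ 0 := poch_ne_zero hc k
  have hck : c + (k : ℂ) ≠ 0 := by
    intro h0
    exact hc k (by linear_combination h0)
  have hfact : (Nat.factorial k : ℂ) ≠ 0 := by
    exact_mod_cast Nat.factorial_ne_zero k
  have hstep : f (k+1) = f k * (x / ((c + k) * ((k : ℂ) + 1))) := by
    simp only [hf]
    rw [poch_succ]
    rw [show Nat.factorial (k+1) = (k+1) * Nat.factorial k from rfl]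
    push_cast
    field_simp
    ring
  have hnk : ‖c + (k : ℂ)‖ ≥ 2 * ‖x‖ + 1 := by
    have h3 : ‖(k : ℂ)‖ ≤ ‖c + k‖ + ‖c‖ := by
      calc ‖(k : ℂ)‖ = ‖(c + k) - c‖ := by ring_nf
        _ ≤ ‖c + (k:ℂ)‖ + ‖c‖ := norm_sub_le _ _
    have h4 : ‖(k : ℂ)‖ = (k : ℝ) := by
      simp
    linarith
  have hk1 : ‖((k : ℂ) + 1)‖ = (k : ℝ) + 1 := by
    rw [show ((k : ℂ) + 1) = ((k + 1 : ℕ) : ℂ) by push_cast; ring, Complex.norm_natCast]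
    push_cast; ring
  have hmul : ‖x / ((c + k) * ((k : ℂ) + 1))‖ ≤ 1/2 := by
    rw [norm_div, norm_mul, hk1]
    have hpos : ‖c + (k : ℂ)‖ * ((k : ℝ) + 1) > 0 := by
      have : (0:ℝ) < 2 * ‖x‖ + 1 := by positivity
      nlinarith [Nat.cast_nonneg (α := ℝ) k]
    rw [div_le_iff₀ hpos]
    nlinarith [norm_nonneg x, Nat.cast_nonneg (α := ℝ) k]
  show ‖‖f (k+1)‖‖ ≤ 1/2 * ‖‖f k‖‖
  rw [hstep]
  have := norm_nonneg (f k)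
  calc ‖‖f k * (x / ((c + k) * ((k : ℂ) + 1)))‖‖
      = ‖f k‖ * ‖x / ((c + k) * ((k : ℂ) + 1))‖ := by
        rw [Real.norm_of_nonneg (norm_nonneg _), norm_mul]
    _ ≤ ‖f k‖ * (1/2) := by
        exact mul_le_mul_of_nonneg_left hmul this
    _ = 1/2 * ‖‖f k‖‖ := by rw [Real.norm_of_nonneg this]; ring

lemma cauchy_coeff (ρ σ : ℂ) (h1 : NotNonposInt ρ) (h2 : NotNonposInt σ) (x : ℂ) (n : ℕ) :
    ∑ k ∈ Finset.range (n+1),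
      (1 / poch ρ k * x ^ k / (Nat.factorial k : ℂ)) *
        (1 / poch σ (n-k) * x ^ (n-k) / (Nat.factorial (n-k) : ℂ))
    = poch (ρ+σ+n-1) n * x ^ n / (poch ρ n * poch σ n * (Nat.factorial n : ℂ)) := by
  have step : ∀ k ∈ Finset.range (n+1),
      (1 / poch ρ k * x ^ k / (Nat.factorial k : ℂ)) *
        (1 / poch σ (n-k) * x ^ (n-k) / (Nat.factorial (n-k) : ℂ))
      = (n.choose k : ℂ) * (poch (ρ+k) (n-k) * poch (σ+(n-k)) k)
          * (x ^ n / (poch ρ n * poch σ n * (Nat.factorial n : ℂ))) := by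
    intro k hk
    have hkn : k ≤ n := Nat.lt_succ_iff.mp (Finset.mem_range.mp hk)
    have e1 : poch ρ n = poch ρ k * poch (ρ+k) (n-k) := by
      rw [← poch_add]; congr 1; omega
    have ecast : σ + ((n:ℂ) - (k:ℂ)) = σ + ((n - k : ℕ) : ℂ) := by
      push_cast [Nat.cast_sub hkn]; ring
    have e2 : poch σ n = poch σ (n-k) * poch (σ+((n:ℂ)-(k:ℂ))) k := by
      rw [ecast, ← poch_add]; congr 1; omega
    have e3 : (Nat.factorial n : ℂ) = (n.choose k : ℂ) * (Nat.factorial k : ℂ)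
        * (Nat.factorial (n-k) : ℂ) := by
      exact_mod_cast congrArg (Nat.cast (R := ℂ))
        (Nat.choose_mul_factorial_mul_factorial hkn).symm
    have e4 : x ^ n = x ^ k * x ^ (n-k) := by rw [← pow_add]; congr 1; omega
    have n1 : poch ρ k ≠ 0 := poch_ne_zero h1 k
    have n2 : poch σ (n-k) ≠ 0 := poch_ne_zero h2 (n-k)
    have n3 : poch (ρ+k) (n-k) ≠ 0 := poch_ne_zero (notNonposInt_add_nat h1 k) (n-k)
    have n4 : poch (σ+((n:ℂ)-(k:ℂ))) k ≠ 0 := by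
      rw [ecast]; exact poch_ne_zero (notNonposInt_add_nat h2 (n-k)) k
    have n5 : (Nat.factorial k : ℂ) ≠ 0 := by exact_mod_cast Nat.factorial_ne_zero k
    have n6 : (Nat.factorial (n-k) : ℂ) ≠ 0 := by exact_mod_cast Nat.factorial_ne_zero (n-k)
    have n7 : (n.choose k : ℂ) ≠ 0 := Nat.cast_ne_zero.mpr (Nat.choose_pos hkn).ne'
    rw [e1, e2, e3, e4]
    field_simp
  rw [Finset.sum_congr rfl step, ← Finset.sum_mul, poch_vand]
  ring

lemma rhs_coeff (ρ σ : ℂ) (h3 : NotNonposInt (ρ + σ - 1)) (x : ℂ) (n : ℕ) :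
    poch ((ρ+σ)/2) n * poch ((ρ+σ-1)/2) n / (poch ρ n * poch σ n * poch (ρ+σ-1) n)
        * (4*x) ^ n / (Nat.factorial n : ℂ)
    = poch (ρ+σ+n-1) n * x ^ n / (poch ρ n * poch σ n * (Nat.factorial n : ℂ)) := by
  have hrel : poch ((ρ+σ)/2) n * poch ((ρ+σ-1)/2) n * 4^n
      = poch (ρ+σ-1) n * poch (ρ+σ+n-1) n := by
    have hd := poch_dup (ρ+σ-1) n
    rw [show ((ρ+σ-1)+1)/2 = (ρ+σ)/2 by ring] at hd
    rw [two_mul, poch_add] at hd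
    rw [show ρ+σ-1+(n:ℂ) = ρ+σ+n-1 by ring] at hd
    linear_combination -hd
  have hR : poch (ρ+σ-1) n ≠ 0 := poch_ne_zero h3 n
  rw [mul_pow]
  rw [show poch ((ρ+σ)/2) n * poch ((ρ+σ-1)/2) n / (poch ρ n * poch σ n * poch (ρ+σ-1) n)
      * ((4:ℂ)^n * x^n) / (Nat.factorial n : ℂ)
      = (poch ((ρ+σ)/2) n * poch ((ρ+σ-1)/2) n * 4^n) * x^n
        / (poch ρ n * poch σ n * poch (ρ+σ-1) n * (Nat.factorial n : ℂ)) by ring, hrel]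
  rw [show poch (ρ+σ-1) n * poch (ρ+σ+n-1) n * x^n
        / (poch ρ n * poch σ n * poch (ρ+σ-1) n * (Nat.factorial n : ℂ))
      = poch (ρ+σ+n-1) n * x^n / (poch ρ n * poch σ n * (Nat.factorial n : ℂ))
        * (poch (ρ+σ-1) n / poch (ρ+σ-1) n) by ring, div_self hR, mul_one]

theorem bailey_product_formula (x ρ σ : ℂ)
    (h1 : NotNonposInt ρ) (h2 : NotNonposInt σ) (h3 : NotNonposInt (ρ + σ - 1)) :
    pFq [] [ρ] x * pFq [] [σ] x =
      pFq [(ρ+σ)/2, (ρ+σ-1)/2] [ρ, σ, ρ+σ-1] (4*x) := by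
  have hfρ : pFq [] [ρ] x = ∑' k : ℕ, 1 / poch ρ k * x ^ k / (Nat.factorial k : ℂ) := by
    unfold pFq
    refine tsum_congr fun k => ?_
    simp
  have hfσ : pFq [] [σ] x = ∑' k : ℕ, 1 / poch σ k * x ^ k / (Nat.factorial k : ℂ) := by
    unfold pFq
    refine tsum_congr fun k => ?_
    simp
  rw [hfρ, hfσ,
    tsum_mul_tsum_eq_tsum_sum_range_of_summable_norm (hsum ρ h1 x) (hsum σ h2 x)]
  unfold pFq
  refine tsum_congr fun n => ?_
  rw [cauchy_coeff ρ σ h1 h2 x n, ← rhs_coeff ρ σ h3 x n]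
  simp only [List.map_cons, List.map_nil, List.prod_cons, List.prod_nil, mul_one]
  ring
end

section
/- Let x be a complex number and α a complex number such that neither 2α nor α+1/2 is a nonpositive integer. Then e^{−x/2} · ₁F₁(α; 2α; x) = ₀F₁(—; α+1/2; x²/16). -/
noncomputable def aa (α : ℂ) (k : ℕ) : ℂ := poch α k / (poch (2*α) k * (Nat.factorial k))
noncomputable def bb (j : ℕ) : ℂ := (-1/2 : ℂ)^j / (Nat.factorial j)
noncomputable def cc (α : ℂ) (n : ℕ) : ℂ := ∑ k ∈ Finset.range (n+1), aa α k * bb (n - k)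
noncomputable def dd (α : ℂ) (m : ℕ) : ℂ := 1/(16^m * poch (α+1/2) m * (Nat.factorial m))

lemma notnonpos_add {c : ℂ} (h : NotNonposInt c) (k : ℕ) : c + k ≠ 0 := by
  intro hl; exact h k (by linear_combination hl)



lemma fact_ne_zero (k : ℕ) : ((Nat.factorial k : ℂ)) ≠ 0 := by
  exact_mod_cast Nat.factorial_ne_zero k

lemma hb (j : ℕ) : (2*((j:ℂ)+1)) * bb (j+1) = - bb j := by
  unfold bb
  rw [Nat.factorial_succ]
  push_cast
  have h1 : ((j:ℂ)+1) ≠ 0 := Nat.cast_add_one_ne_zero j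
  have h2 := fact_ne_zero j
  field_simp
  ring

lemma hP1 {α : ℂ} (h1 : NotNonposInt (2*α)) (k : ℕ) :
    ((k:ℂ)+1)*(2*α+k) * aa α (k+1) = (α + k) * aa α k := by
  unfold aa
  rw [poch_succ, poch_succ, Nat.factorial_succ]
  push_cast
  have h2 : ((k:ℂ)+1) ≠ 0 := Nat.cast_add_one_ne_zero k
  have h3 := fact_ne_zero k
  have h4 := poch_ne_zero h1 k
  have h5 := notnonpos_add h1 k
  field_simp

lemma key {α : ℂ} (h1 : NotNonposInt (2*α)) (N : ℕ) :
    ((N:ℂ)+1)*((N:ℂ)+2*α) * cc α (N+1)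
      = (∑ k ∈ Finset.range N, aa α k * bb (N-1-k))/4 := by
  have S1 : (∑ k ∈ Finset.range N, aa α k * bb (N-1-k))
      = ∑ k ∈ Finset.range (N+2), (4*((N:ℂ)-k)*((N:ℂ)+1-k)) * (aa α k * bb (N+1-k)) := by
    rw [Finset.sum_range_succ, Finset.sum_range_succ]
    have z1 : (4*((N:ℂ)-(N:ℂ))*((N:ℂ)+1-(N:ℂ))) * (aa α N * bb (N+1-N)) = 0 := by ring
    have z2 : (4*((N:ℂ)-((N+1:ℕ):ℂ))*((N:ℂ)+1-((N+1:ℕ):ℂ))) * (aa α (N+1) * bb (N+1-(N+1))) = 0 := by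
      push_cast; ring
    rw [z1, z2, add_zero, add_zero]
    apply Finset.sum_congr rfl
    intro k hk
    have hk' : k < N := Finset.mem_range.1 hk
    set j := N - 1 - k with hj
    have e1 : N - k = j + 1 := by omega
    have e2 : N + 1 - k = j + 2 := by omega
    have hcast : ((j:ℕ):ℂ) = (N:ℂ) - 1 - k := by
      have : ((j:ℕ):ℂ) = ((N - (k+1) : ℕ):ℂ) := by norm_cast; omega
      rw [this, Nat.cast_sub (by omega)]; push_cast; ring
    have hbj : bb j = 4*((j:ℂ)+1)*((j:ℂ)+2)*bb (j+2) := by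
      have e3 := hb j
      have e4 := hb (j+1)
      push_cast at e4
      linear_combination e3 + (-2*((j:ℂ)+1))*e4
    rw [e2, hbj]
    linear_combination (4 * aa α k * bb (j+2) * ((j:ℂ) + (N:ℂ) - (k:ℂ) + 2)) * hcast
  have S2 : (∑ k ∈ Finset.range (N+2), ((k:ℂ)*((k:ℂ)-1+2*α)) * (aa α k * bb (N+1-k)))
      = ∑ k ∈ Finset.range (N+1), (((k:ℂ)+1)*((k:ℂ)+2*α)) * (aa α (k+1) * bb (N-k)) := by
    rw [Finset.sum_range_succ']
    simp only [Nat.cast_zero]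
    have : ((0:ℂ)*((0:ℂ)-1+2*α)) * (aa α 0 * bb (N+1-0)) = 0 := by ring
    rw [this, add_zero]
    apply Finset.sum_congr rfl
    intro k _
    have : N + 1 - (k+1) = N - k := by omega
    rw [this]
    push_cast
    ring
  have S3 : (∑ k ∈ Finset.range (N+2), (2*((k:ℂ)+α)*((N:ℂ)+1-(k:ℂ))) * (aa α k * bb (N+1-k)))
      = ∑ k ∈ Finset.range (N+1), (-((k:ℂ)+α)) * (aa α k * bb (N-k)) := by
    rw [Finset.sum_range_succ]
    have z : (2*(((N+1:ℕ):ℂ)+α)*((N:ℂ)+1-((N+1:ℕ):ℂ))) * (aa α (N+1) * bb (N+1-(N+1))) = 0 := by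
      push_cast; ring
    rw [z, add_zero]
    apply Finset.sum_congr rfl
    intro k hk
    have hk' : k ≤ N := by have := Finset.mem_range.1 hk; omega
    set j := N - k with hj
    have e1 : N + 1 - k = j + 1 := by omega
    have hcast : ((j:ℕ):ℂ) = (N:ℂ) - k := by
      rw [hj, Nat.cast_sub hk']
    have e3 := hb j
    rw [e1]
    linear_combination ((k:ℂ)+α) * aa α k * e3
      - (2*((k:ℂ)+α) * aa α k * bb (j+1)) * hcast
  have S4 : ∑ k ∈ Finset.range (N+1),
      ((((k:ℂ)+1)*((k:ℂ)+2*α)) * (aa α (k+1) * bb (N-k)) + (-((k:ℂ)+α)) * (aa α k * bb (N-k))) = 0 := by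
    apply Finset.sum_eq_zero
    intro k _
    have := hP1 h1 k
    linear_combination bb (N-k) * this
  have S0 : ((N:ℂ)+1)*((N:ℂ)+2*α) * cc α (N+1)
      = ∑ k ∈ Finset.range (N+2), (((N:ℂ)+1)*((N:ℂ)+2*α)) * (aa α k * bb (N+1-k)) := by
    unfold cc
    rw [Finset.mul_sum]
  have main : ∑ k ∈ Finset.range (N+2), (((N:ℂ)+1)*((N:ℂ)+2*α)) * (aa α k * bb (N+1-k))
      = (∑ k ∈ Finset.range (N+2), (((N:ℂ)-k)*((N:ℂ)+1-k)) * (aa α k * bb (N+1-k)))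
        + ((∑ k ∈ Finset.range (N+2), ((k:ℂ)*((k:ℂ)-1+2*α)) * (aa α k * bb (N+1-k)))
          + (∑ k ∈ Finset.range (N+2), (2*((k:ℂ)+α)*((N:ℂ)+1-(k:ℂ))) * (aa α k * bb (N+1-k)))) := by
    rw [← Finset.sum_add_distrib, ← Finset.sum_add_distrib]
    apply Finset.sum_congr rfl
    intro k _
    ring
  rw [S0, main, S2, S3, ← Finset.sum_add_distrib, S4, add_zero, S1, Finset.sum_div]
  apply Finset.sum_congr rfl
  intro k _
  ring

lemma cc_zero (α : ℂ) : cc α 0 = 1 := by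
  simp [cc, aa, bb, poch]

lemma two_alpha_add {α : ℂ} (h1 : NotNonposInt (2*α)) (k : ℕ) : 2*α + k ≠ 0 :=
  notnonpos_add h1 k

lemma cc_one {α : ℂ} (h1 : NotNonposInt (2*α)) : cc α 1 = 0 := by
  have h := key h1 0
  simp only [Nat.cast_zero, Finset.range_zero, Finset.sum_empty, zero_div] at h
  have h2α : 2*α ≠ 0 := by
    have := two_alpha_add h1 0
    simpa using this
  have : (0+1)*(0+2*α) = 2*α := by ring
  rw [this] at h
  exact (mul_eq_zero.1 h).resolve_left h2α

lemma cc_rec {α : ℂ} (h1 : NotNonposInt (2*α)) (n : ℕ) :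
    (((n:ℂ)+2)*((n:ℂ)+1+2*α)) * cc α (n+2) = cc α n / 4 := by
  have h := key h1 (n+1)
  have e : ∀ k, (n+1) - 1 - k = n - k := fun k => by omega
  have e2 : (∑ k ∈ Finset.range (n+1), aa α k * bb (n+1-1-k)) = cc α n := by
    unfold cc
    apply Finset.sum_congr rfl
    intro k _
    rw [e k]
  rw [e2] at h
  push_cast at h
  linear_combination h


lemma natc_ne_zero (n : ℕ) (h : n ≠ 0) : ((n:ℕ):ℂ) ≠ 0 := Nat.cast_ne_zero.2 h

lemma cc_closed {α : ℂ} (h1 : NotNonposInt (2*α)) (h2 : NotNonposInt (α + 1/2)) :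
    ∀ m, cc α (2*m) = dd α m ∧ cc α (2*m+1) = 0 := by
  intro m
  induction m with
  | zero =>
    refine ⟨?_, ?_⟩
    · rw [show 2*0 = 0 from rfl, cc_zero]; simp [dd, poch]
    · rw [show 2*0+1 = 1 from rfl]; exact cc_one h1
  | succ m ih =>
    obtain ⟨ihe, iho⟩ := ih
    refine ⟨?_, ?_⟩
    · have hrec := cc_rec h1 (2*m)
      rw [show 2*m+2 = 2*(m+1) from by ring] at hrec
      rw [ihe] at hrec
      have hA1 : ((2*m:ℕ):ℂ)+2 ≠ 0 := by
        exact_mod_cast natc_ne_zero (2*m+2) (by omega)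
      have hA2 : ((2*m:ℕ):ℂ)+1+2*α ≠ 0 := by
        have := notnonpos_add h1 (2*m+1)
        intro h; apply this
        push_cast at h ⊢
        linear_combination h
      have hcc : cc α (2*(m+1)) = dd α m / (4*(((2*m:ℕ):ℂ)+2)*(((2*m:ℕ):ℂ)+1+2*α)) := by
        rw [eq_div_iff (by exact mul_ne_zero (mul_ne_zero (by norm_num) hA1) hA2)]
        linear_combination 4*hrec
      rw [hcc]
      unfold dd
      rw [poch_succ, Nat.factorial_succ, pow_succ]
      have n1 : (16:ℂ)^m ≠ 0 := pow_ne_zero _ (by norm_num)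
      have n2 : poch (α+1/2) m ≠ 0 := poch_ne_zero h2 m
      have n3 : (α+1/2+(m:ℂ)) ≠ 0 := notnonpos_add h2 m
      have n4 := fact_ne_zero m
      have n5 : ((m:ℂ)+1) ≠ 0 := by exact_mod_cast natc_ne_zero (m+1) (by omega)
      push_cast
      rw [div_div]
      simp only [one_div]
      rw [inv_inj]
      ring
    · have hrec := cc_rec h1 (2*m+1)
      rw [show 2*m+1+2 = 2*(m+1)+1 from by ring, iho, zero_div] at hrec
      have hA1 : ((2*m+1:ℕ):ℂ)+2 ≠ 0 := by
        exact_mod_cast natc_ne_zero (2*m+3) (by omega)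
      have hA2 : ((2*m+1:ℕ):ℂ)+1+2*α ≠ 0 := by
        have := notnonpos_add h1 (2*m+2)
        intro h; apply this
        push_cast at h ⊢
        linear_combination h
      have := mul_eq_zero.1 hrec
      rcases this with h | h
      · exact absurd h (mul_ne_zero hA1 hA2)
      · exact h

lemma sumB (x : ℂ) : Summable fun j => ‖bb j * x^j‖ := by
  have h := Real.summable_pow_div_factorial (‖x‖/2)
  apply h.congr
  intro j
  unfold bb
  rw [norm_mul, norm_div, norm_pow, norm_pow]
  simp [Complex.norm_natCast, abs_of_nonneg, div_pow]
  ring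

lemma expB (x : ℂ) : Complex.exp (-x/2) = ∑' j, bb j * x^j := by
  rw [Complex.exp_eq_exp_ℂ, NormedSpace.exp_eq_tsum_div]
  apply tsum_congr
  intro j
  unfold bb
  rw [show -x/2 = (-1/2 : ℂ) * x by ring, mul_pow]
  ring

lemma sumA {α : ℂ} (h1 : NotNonposInt (2*α)) (x : ℂ) :
    Summable fun k => ‖aa α k * x^k‖ := by
  apply summable_of_ratio_norm_eventually_le (r := 1/2) (by norm_num)
  rw [Filter.eventually_atTop]
  refine ⟨Nat.ceil (5*‖α‖ + 4*‖x‖) + 1, fun k hk => ?_⟩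
  have hk' : (5*‖α‖ + 4*‖x‖) ≤ k := by
    calc (5*‖α‖ + 4*‖x‖) ≤ Nat.ceil (5*‖α‖ + 4*‖x‖) := Nat.le_ceil _
    _ ≤ (k:ℝ) := by exact_mod_cast Nat.le_of_lt hk
  have hden : ((k:ℂ)+1)*(2*α+k) ≠ 0 :=
    mul_ne_zero (Nat.cast_add_one_ne_zero k) (notnonpos_add h1 k)
  have haa : aa α (k+1) = (α + k) * aa α k / (((k:ℂ)+1)*(2*α+k)) := by
    rw [eq_div_iff hden]
    linear_combination hP1 h1 k
  have hx0 : (0:ℝ) ≤ ‖α‖ := norm_nonneg _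
  have hxx : (0:ℝ) ≤ ‖x‖ := norm_nonneg _
  have hb1 : ‖α + (k:ℂ)‖ ≤ (k:ℝ) + ‖α‖ := by
    calc ‖α + (k:ℂ)‖ ≤ ‖α‖ + ‖(k:ℂ)‖ := norm_add_le _ _
    _ = (k:ℝ) + ‖α‖ := by rw [Complex.norm_natCast]; ring
  have hb2 : (k:ℝ) - 2*‖α‖ ≤ ‖2*α + (k:ℂ)‖ := by
    have t := norm_sub_norm_le ((k:ℂ)) (-(2*α))
    rw [sub_neg_eq_add, norm_neg, add_comm] at t
    have h2 : ‖(2:ℂ)*α‖ = 2*‖α‖ := by rw [norm_mul]; simp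
    rw [Complex.norm_natCast, h2] at t
    linarith
  have key1 : ‖α + (k:ℂ)‖ ≤ 2 * ‖2*α + (k:ℂ)‖ := by nlinarith
  have key2 : ‖x‖ ≤ ((k:ℝ)+1) / 4 := by nlinarith
  rw [norm_norm, norm_norm, haa]
  have e1 : (α + ↑k) * aa α k / ((↑k + 1) * (2 * α + ↑k)) * x ^ (k + 1)
      = ((α + ↑k) * x / (((k:ℂ) + 1) * (2 * α + ↑k))) * (aa α k * x ^ k) := by
    rw [pow_succ]; ring
  rw [e1, norm_mul]
  have hk1 : ‖(k:ℂ)+1‖ = (k:ℝ)+1 := by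
    rw [show ((k:ℂ)+1) = ((k+1:ℕ):ℂ) by push_cast; ring, Complex.norm_natCast]; push_cast; ring
  have hden2 : (0:ℝ) < ‖2*α+(k:ℂ)‖ := by
    rw [norm_pos_iff]; exact notnonpos_add h1 k
  have hq : ‖(α + ↑k) * x / (((k:ℂ) + 1) * (2 * α + ↑k))‖ ≤ 1/2 := by
    rw [norm_div, norm_mul, norm_mul, hk1, div_le_iff₀ (by positivity)]
    have t := mul_le_mul key1 key2 hxx (by positivity : (0:ℝ) ≤ 2 * ‖2*α + (k:ℂ)‖)
    calc ‖α + ↑k‖ * ‖x‖ ≤ 2 * ‖2*α + (k:ℂ)‖ * (((k:ℝ)+1)/4) := t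
      _ ≤ 1/2 * ((↑k + 1) * ‖2 * α + ↑k‖) := by nlinarith
  calc ‖(α + ↑k) * x / (((k:ℂ) + 1) * (2 * α + ↑k))‖ * ‖aa α k * x ^ k‖
      ≤ 1/2 * ‖aa α k * x ^ k‖ := mul_le_mul_of_nonneg_right hq (norm_nonneg _)
    _ = 1/2 * ‖aa α k * x ^ k‖ := rfl

set_option maxHeartbeats 1000000 in
theorem kummer_second_transformation (x α : ℂ)
    (h1 : NotNonposInt (2*α)) (h2 : NotNonposInt (α + 1/2)) :
    Complex.exp (-x/2) * pFq [α] [2*α] x = pFq [] [α + 1/2] (x^2/16) := by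
  have hsA := sumA h1 x
  have hsB := sumB x
  have hpFqL : pFq [α] [2*α] x = ∑' k, aa α k * x^k := by
    unfold pFq
    apply tsum_congr
    intro k
    simp only [List.map_cons, List.map_nil, List.prod_cons, List.prod_nil, mul_one]
    unfold aa
    have n1 := poch_ne_zero h1 k
    have n2 := fact_ne_zero k
    field_simp
  have step3 : ∀ n, (∑ k ∈ Finset.range (n+1), (aa α k * x^k) * (bb (n-k) * x^(n-k)))
      = cc α n * x^n := by
    intro n
    unfold cc
    rw [Finset.sum_mul]
    apply Finset.sum_congr rfl
    intro k hk
    have hkn : k ≤ n := by have := Finset.mem_range.1 hk; omega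
    have : x^k * x^(n-k) = x^n := by
      rw [← pow_add]
      congr 1
      omega
    calc (aa α k * x^k) * (bb (n-k) * x^(n-k)) = aa α k * bb (n-k) * (x^k * x^(n-k)) := by ring
      _ = aa α k * bb (n - k) * x ^ n := by rw [this]
  have hC : Complex.exp (-x/2) * pFq [α] [2*α] x = ∑' n, cc α n * x^n := by
    rw [expB, hpFqL, mul_comm]
    rw [tsum_mul_tsum_eq_tsum_sum_range_of_summable_norm hsA hsB]
    exact tsum_congr step3
  have h0 : ∀ m : ℕ, cc α (2*m+1) * x^(2*m+1) = 0 := fun m => by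
    rw [(cc_closed h1 h2 m).2, zero_mul]
  have hf : Summable (fun n => cc α n * x^n) := by
    apply ((summable_norm_sum_mul_range_of_summable_norm hsA hsB).of_norm).congr
    intro n
    exact step3 n
  have hinj : Function.Injective (fun m : ℕ => 2*m) := fun a b h => by
    dsimp at h; omega
  have hfe : Summable (fun m => cc α (2*m) * x^(2*m)) := hf.comp_injective hinj
  have hfo : Summable (fun m => cc α (2*m+1) * x^(2*m+1)) := by
    apply summable_zero.congr
    intro m
    exact (h0 m).symm
  have heo : (∑' m, cc α (2*m) * x^(2*m)) + (∑' m, cc α (2*m+1) * x^(2*m+1))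
      = ∑' n, cc α n * x^n := tsum_even_add_odd (f := fun n => cc α n * x^n) hfe hfo
  have hzero : (∑' m, cc α (2*m+1) * x^(2*m+1)) = 0 := by
    calc (∑' m, cc α (2*m+1) * x^(2*m+1)) = ∑' _ : ℕ, (0:ℂ) := tsum_congr h0
    _ = 0 := tsum_zero
  rw [hC, ← heo, hzero, add_zero]
  unfold pFq
  apply tsum_congr
  intro m
  simp only [List.map_cons, List.map_nil, List.prod_cons, List.prod_nil, mul_one]
  rw [(cc_closed h1 h2 m).1]
  unfold dd
  have n1 : (16:ℂ)^m ≠ 0 := pow_ne_zero _ (by norm_num)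
  have n2 := poch_ne_zero h2 m
  have n3 := fact_ne_zero m
  rw [div_pow, ← pow_mul]
  field_simp
end
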